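/- arXiv:1704.04254 — 7 statements merged into one kernel-verified Lean document; each statement's English description precedes it below -/
import Mathlib

section
/- Let 0 < d < π/4, λ₁ > 0 and 0 < b < λ₁/√2. There exists a constant C > 0, depending only on λ₁, b and d, such that for every real λ ≥ λ₁ and every y ∈ ℂ with |Im y| ≤ d one has |z(y) − λ| ≥ C. -/
/-- Two-parameter Mittag-Leffler function `e_{γ,μ}(z) = ∑ₖ zᵏ / Γ(kγ+μ)`,
with the reciprocal Gamma interpreted as `0` at non-positive integers. -/
noncomputable def mlf (γ μ : ℝ) (z : ℂ) : ℂ :=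
  ∑' k : ℕ, (Complex.Gamma (((k : ℝ) * γ + μ : ℝ) : ℂ))⁻¹ * z ^ k

/-- Hyperbolic contour `z(y) = b (cosh y + i sinh y)`. -/
noncomputable def zc (b : ℝ) (y : ℂ) : ℂ :=
  (b : ℂ) * (Complex.cosh y + Complex.I * Complex.sinh y)

/-- Derivative of the hyperbolic contour, `z'(y) = b (sinh y + i cosh y)`. -/
noncomputable def zcDeriv (b : ℝ) (y : ℂ) : ℂ :=
  (b : ℂ) * (Complex.sinh y + Complex.I * Complex.cosh y)

/-!
For `y = x + i v` one has `z(y) = b cosh x (cos v - sin v) + i b sinh x (cos v + sin v)`.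
On the strip `|v| ≤ d < π/4`, `cos v - sin v ≤ √2` and `cos v + sin v ≥ cos d - sin d > 0`.
Put `m = (√2 b + λ₁) / 2`. If `√2 b cosh x ≤ m`, then `Re z(y) ≤ m` lies at
distance at least `λ₁ - m` to the left of `λ`. Otherwise `√2 b |sinh x| ≥ √2 b (cosh x - 1)`
exceeds `m - √2 b`, which bounds `|Im z(y)|` from below.
-/

open Real

lemma Real.cos_sub_sin_le_sqrt_two (v : ℝ) : cos v - sin v ≤ √2 :=
  (le_abs_self _).trans <| abs_le_sqrt <| by
    nlinarith [sin_sq_add_cos_sq v, sq_nonneg (cos v + sin v)]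

lemma Real.cos_sub_sin_pos {d : ℝ} (hd₀ : 0 ≤ d) (hd : d < π / 4) : 0 < cos d - sin d := by
  have := sin_lt_sin_of_lt_of_le_pi_div_two (x := d) (y := π / 2 - d) (by linarith [pi_pos])
    (by linarith) (by linarith)
  rw [sin_pi_div_two_sub] at this
  linarith

lemma Real.cos_sub_sin_le_cos_add_sin {d v : ℝ} (hd : d ≤ π / 2) (hv : |v| ≤ d) :
    cos d - sin d ≤ cos v + sin v := by
  obtain ⟨hv₁, hv₂⟩ := abs_le.mp hv
  have hcos : cos d ≤ cos v := by
    rw [← cos_abs v]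
    exact cos_le_cos_of_nonneg_of_le_pi (abs_nonneg v) (by linarith [pi_pos]) hv
  have hsin : sin (-d) ≤ sin v :=
    sin_le_sin_of_le_of_le_pi_div_two (by linarith) (by linarith) hv₁
  rw [sin_neg] at hsin
  linarith

lemma Real.cosh_le_one_add_abs_sinh (x : ℝ) : cosh x ≤ 1 + |sinh x| := by
  nlinarith [cosh_sq x, sq_abs (sinh x), abs_nonneg (sinh x), cosh_pos x]

lemma zc_re (b : ℝ) (y : ℂ) : (zc b y).re = b * cosh y.re * (cos y.im - sin y.im) := by
  conv_lhs => rw [← Complex.re_add_im y]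
  simp only [zc, Complex.cosh_add, Complex.sinh_add, Complex.cosh_mul_I, Complex.sinh_mul_I,
    ← Complex.ofReal_cosh, ← Complex.ofReal_sinh, ← Complex.ofReal_cos, ← Complex.ofReal_sin]
  simp [Complex.cos_ofReal_re, Complex.sin_ofReal_re, Complex.sinh_ofReal_re]
  ring

lemma zc_im (b : ℝ) (y : ℂ) : (zc b y).im = b * sinh y.re * (cos y.im + sin y.im) := by
  conv_lhs => rw [← Complex.re_add_im y]
  simp only [zc, Complex.cosh_add, Complex.sinh_add, Complex.cosh_mul_I, Complex.sinh_mul_I,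
    ← Complex.ofReal_cosh, ← Complex.ofReal_sinh, ← Complex.ofReal_cos, ← Complex.ofReal_sin]
  simp [Complex.cos_ofReal_re, Complex.sin_ofReal_re, Complex.sinh_ofReal_re]
  ring

lemma sub_le_norm_zc_sub_ofReal_of_cosh_le {b t : ℝ} (hb : 0 ≤ b) (lam : ℝ) {y : ℂ}
    (h : √2 * b * cosh y.re ≤ t) : lam - t ≤ ‖zc b y - lam‖ := by
  have hre : (zc b y).re ≤ √2 * b * cosh y.re :=
    calc (zc b y).re = b * cosh y.re * (cos y.im - sin y.im) := zc_re b y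
      _ ≤ b * cosh y.re * √2 := by gcongr; exact cos_sub_sin_le_sqrt_two _
      _ = √2 * b * cosh y.re := by ring
  calc lam - t ≤ -(zc b y - lam).re := by
        simp only [Complex.sub_re, Complex.ofReal_re]; linarith
    _ ≤ ‖zc b y - lam‖ := (neg_le_abs _).trans (Complex.abs_re_le_norm _)

lemma mul_abs_sinh_le_norm_zc_sub_ofReal {b d : ℝ} (hb : 0 ≤ b) (hd : d ≤ π / 2)
    (hc : 0 ≤ cos d - sin d) (lam : ℝ) {y : ℂ} (hy : |y.im| ≤ d) :
    b * |sinh y.re| * (cos d - sin d) ≤ ‖zc b y - lam‖ := by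
  have hcv := cos_sub_sin_le_cos_add_sin hd hy
  calc b * |sinh y.re| * (cos d - sin d) ≤ b * |sinh y.re| * (cos y.im + sin y.im) := by
        gcongr
    _ = |(zc b y - lam).im| := by
        rw [Complex.sub_im, Complex.ofReal_im, sub_zero, zc_im, abs_mul, abs_mul,
          abs_of_nonneg hb, abs_of_nonneg (hc.trans hcv)]
    _ ≤ ‖zc b y - lam‖ := Complex.abs_im_le_norm _

theorem stmt0_general (d lam1 b : ℝ) (hd : 0 < d) (hd' : d < Real.pi / 4)
    (hb : 0 < b) (hb' : b < lam1 / Real.sqrt 2) :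
    ∃ C : ℝ, 0 < C ∧ ∀ lam : ℝ, lam1 ≤ lam → ∀ y : ℂ, |y.im| ≤ d →
      C ≤ ‖zc b y - (lam : ℂ)‖ := by
  have hμ : √2 * b < lam1 := by rwa [lt_div_iff₀ (by positivity), mul_comm] at hb'
  set ε := (lam1 - √2 * b) / 2 with hε_def
  set c := cos d - sin d
  have hε : 0 < ε := by rw [hε_def]; linarith
  have hc : 0 < c := cos_sub_sin_pos hd.le hd'
  have hc₁ : c ≤ 1 := by
    linarith [cos_le_one d, sin_nonneg_of_nonneg_of_le_pi hd.le (by linarith [pi_pos])]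
  refine ⟨ε * c / 2, by positivity, fun lam hlam y hy => ?_⟩
  rcases le_or_gt (√2 * b * cosh y.re) (lam1 - ε) with h | h
  · calc ε * c / 2 ≤ ε := by nlinarith
      _ ≤ lam - (lam1 - ε) := by linarith
      _ ≤ ‖zc b y - lam‖ := sub_le_norm_zc_sub_ofReal_of_cosh_le hb.le lam h
  · have hcosh := mul_le_mul_of_nonneg_left (cosh_le_one_add_abs_sinh y.re)
      (by positivity : 0 ≤ √2 * b)
    have hsinh : ε < √2 * b * |sinh y.re| := by rw [hε_def] at h ⊢; linarith
    have hsqrt : √2 * (b * |sinh y.re|) ≤ 2 * (b * |sinh y.re|) :=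
      mul_le_mul_of_nonneg_right ((sqrt_le_left zero_le_two).mpr (by norm_num)) (by positivity)
    calc ε * c / 2 = ε / 2 * c := by ring
      _ ≤ b * |sinh y.re| * c := by gcongr; linarith
      _ ≤ ‖zc b y - lam‖ :=
        mul_abs_sinh_le_norm_zc_sub_ofReal hb.le (by linarith) hc.le lam hy

/-- for `0 < d < π/4`, `λ₁ > 0`, `0 < b < λ₁/√2`, there is `C > 0`
(depending only on `λ₁, b, d`) with `|z(y) - λ| ≥ C` for all `λ ≥ λ₁` and all
`y` in the closed strip `|Im y| ≤ d`. -/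
theorem stmt0 (d lam1 b : ℝ) (hd : 0 < d) (hd' : d < Real.pi / 4)
    (hlam1 : 0 < lam1) (hb : 0 < b) (hb' : b < lam1 / Real.sqrt 2) :
    ∃ C : ℝ, 0 < C ∧ ∀ lam : ℝ, lam1 ≤ lam → ∀ y : ℂ, |y.im| ≤ d →
      C ≤ ‖zc b y - (lam : ℂ)‖ :=
  stmt0_general d lam1 b hd hd' hb hb'
end

section
/- Let 0 < d < π/4, λ₁ > 0 and 0 < b < λ₁/√2. There exists a constant C > 0, depending only on λ₁, b and d, such that for every real λ ≥ λ₁ and every y ∈ ℂ with |Im y| < d one has |z'(y) · (z(y) − λ)⁻¹| ≤ C. -/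
/-!
Rotating by `π/4` turns the contour into `z(y) = a cosh w`, `z'(y) = a sinh w` with `a = √2 b`
and `w = y + iπ/4`, whose imaginary part `θ` stays in `(π/4 - d, π/4 + d) ⊂ (0, π/2)`.
Writing `w = x + iθ`, one has `|sinh w| ≤ cosh x` and the identity
`|a cosh w - λ|² = (a cosh x - λ cos θ)² + (λ² - a²) sin² θ`.
Since `λ ≥ λ₁ > a`, the second term is at least `m λ²` for a fixed `m > 0`, and the quadratic
form `(X - cλ)² + m λ²` with `|c| ≤ 1` dominates `m X² / 2`; taking `X = a cosh x` bounds
`|z'|² / |z - λ|²` by `2 / m`.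
-/

open Complex
open scoped Real

lemma mul_sq_le_two_mul_sq_sub_mul_add_mul_sq (X c lam m : ℝ) (hc : |c| ≤ 1) (hm0 : 0 ≤ m)
    (hm1 : m ≤ 1) : m * X ^ 2 ≤ 2 * ((X - c * lam) ^ 2 + m * lam ^ 2) := by
  have hc2 : c ^ 2 ≤ 1 := (sq_le_one_iff_abs_le_one c).2 hc
  have hX : X ^ 2 ≤ 2 * (X - c * lam) ^ 2 + 2 * lam ^ 2 := by
    nlinarith [sq_nonneg (X - 2 * c * lam), mul_le_mul_of_nonneg_right hc2 (sq_nonneg lam)]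
  calc m * X ^ 2 ≤ m * (2 * (X - c * lam) ^ 2 + 2 * lam ^ 2) := by gcongr
    _ ≤ 2 * ((X - c * lam) ^ 2 + m * lam ^ 2) := by
      nlinarith [mul_le_mul_of_nonneg_right hm1 (sq_nonneg (X - c * lam))]

lemma Real.sin_pi_div_four_sub_le_sin_add_pi_div_four {v d : ℝ} (hv : |v| ≤ d)
    (hd : d ≤ 3 * π / 4) : Real.sin (π / 4 - d) ≤ Real.sin (v + π / 4) := by
  rw [← Real.cos_pi_div_two_sub, ← Real.cos_pi_div_two_sub, ← Real.cos_abs (π / 2 - (v + π / 4))]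
  have hv' := abs_le.1 hv
  apply Real.cos_le_cos_of_nonneg_of_le_pi (abs_nonneg _) (by linarith)
  rw [abs_le]; constructor <;> linarith

lemma norm_mul_inv_le_sqrt {𝕜 : Type*} [NormedDivisionRing 𝕜] {u v : 𝕜} {K : ℝ}
    (h : ‖u‖ ^ 2 ≤ K * ‖v‖ ^ 2) : ‖u * v⁻¹‖ ≤ √K := by
  rw [norm_mul, norm_inv, ← div_eq_mul_inv]
  refine div_le_of_le_mul₀ (norm_nonneg v) (Real.sqrt_nonneg K) ?_
  calc ‖u‖ = √(‖u‖ ^ 2) := (Real.sqrt_sq (norm_nonneg u)).symm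
    _ ≤ √(K * ‖v‖ ^ 2) := Real.sqrt_le_sqrt h
    _ = √K * ‖v‖ := by rw [Real.sqrt_mul' _ (sq_nonneg _), Real.sqrt_sq (norm_nonneg v)]

lemma Complex.cosh_eq_re_add_im (w : ℂ) :
    cosh w = Real.cosh w.re * Real.cos w.im + Real.sinh w.re * Real.sin w.im * I := by
  conv_lhs => rw [← re_add_im w]
  rw [cosh_add, cosh_mul_I, sinh_mul_I]
  push_cast
  ring

lemma Complex.norm_sinh_le_cosh_re (w : ℂ) : ‖sinh w‖ ≤ Real.cosh w.re := by
  rw [sinh, Real.cosh_eq, norm_div, RCLike.norm_ofNat]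
  gcongr
  refine (norm_sub_le _ _).trans_eq ?_
  rw [norm_exp, norm_exp, neg_re]

lemma norm_ofReal_mul_cosh_sub_ofReal_sq (a lam : ℝ) (w : ℂ) :
    ‖(a : ℂ) * cosh w - lam‖ ^ 2 =
      (a * Real.cosh w.re - lam * Real.cos w.im) ^ 2 + (lam ^ 2 - a ^ 2) * Real.sin w.im ^ 2 := by
  rw [Complex.sq_norm, normSq_apply, cosh_eq_re_add_im]
  simp only [sub_re, sub_im, mul_re, mul_im, add_re, add_im, ofReal_re, ofReal_im, I_re, I_im]
  linear_combination (-a ^ 2 * Real.sin w.im ^ 2) * Real.cosh_sq_sub_sinh_sq w.re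
    + (a ^ 2 * Real.cosh w.re ^ 2 - lam ^ 2) * Real.sin_sq_add_cos_sq w.im

lemma sq_add_mul_sq_le_sq_norm_ofReal_mul_cosh_sub (a lam1 lam σ : ℝ) (w : ℂ) (ha : |a| < lam1)
    (hlam : lam1 ≤ lam) (hσ : 0 ≤ σ) (hσw : σ ≤ Real.sin w.im) :
    (a * Real.cosh w.re - lam * Real.cos w.im) ^ 2 + (1 - (a / lam1) ^ 2) * σ ^ 2 * lam ^ 2 ≤
      ‖(a : ℂ) * cosh w - lam‖ ^ 2 := by
  have hlam1 : 0 < lam1 := (abs_nonneg a).trans_lt ha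
  have hlam2 : (1 - (a / lam1) ^ 2) * lam ^ 2 ≤ lam ^ 2 - a ^ 2 := by
    have : a ^ 2 ≤ (a / lam1) ^ 2 * lam ^ 2 := by
      rw [div_pow, div_mul_eq_mul_div, le_div_iff₀ (by positivity)]
      gcongr
    linarith
  have hκ : (a / lam1) ^ 2 ≤ 1 := by
    rw [div_pow, div_le_one (by positivity), sq_le_sq, abs_of_pos hlam1]
    exact ha.le
  have hsin : (1 - (a / lam1) ^ 2) * σ ^ 2 * lam ^ 2 ≤ (lam ^ 2 - a ^ 2) * Real.sin w.im ^ 2 :=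
    calc (1 - (a / lam1) ^ 2) * σ ^ 2 * lam ^ 2 = (1 - (a / lam1) ^ 2) * lam ^ 2 * σ ^ 2 := by ring
      _ ≤ _ := mul_le_mul hlam2 (pow_le_pow_left₀ hσ hσw 2) (sq_nonneg σ)
        ((mul_nonneg (by linarith) (sq_nonneg lam)).trans hlam2)
  rw [norm_ofReal_mul_cosh_sub_ofReal_sq]
  linarith

lemma exists_sq_norm_mul_sinh_le (a lam1 σ : ℝ) (ha : |a| < lam1) (hσ : 0 < σ) :
    ∃ K > 0, ∀ lam : ℝ, lam1 ≤ lam → ∀ w : ℂ, σ ≤ Real.sin w.im →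
      ‖(a : ℂ) * sinh w‖ ^ 2 ≤ K * ‖(a : ℂ) * cosh w - lam‖ ^ 2 := by
  have hκ : (a / lam1) ^ 2 < 1 := by
    have hlam1 : 0 < lam1 := (abs_nonneg a).trans_lt ha
    rw [div_pow, div_lt_one (by positivity), sq_lt_sq, abs_of_pos hlam1]
    exact ha
  set m := (1 - (a / lam1) ^ 2) * σ ^ 2
  have hm : 0 < m := mul_pos (by linarith) (by positivity)
  refine ⟨2 / m, by positivity, fun lam hlam w hσw => ?_⟩
  have hm1 : m ≤ 1 := mul_le_one₀ (by linarith [sq_nonneg (a / lam1)]) (sq_nonneg σ)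
    ((pow_le_pow_left₀ hσ.le hσw 2).trans (Real.sin_sq_le_one _))
  have hnum : ‖(a : ℂ) * sinh w‖ ^ 2 ≤ (a * Real.cosh w.re) ^ 2 := by
    rw [norm_mul, norm_real, Real.norm_eq_abs, mul_pow, mul_pow, sq_abs]
    gcongr
    exact norm_sinh_le_cosh_re w
  have hden := sq_add_mul_sq_le_sq_norm_ofReal_mul_cosh_sub a lam1 lam σ w ha hlam hσ.le hσw
  have hform := mul_sq_le_two_mul_sq_sub_mul_add_mul_sq (a * Real.cosh w.re) (Real.cos w.im) lam
    m (Real.abs_cos_le_one _) hm.le hm1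
  rw [div_mul_eq_mul_div, le_div_iff₀ hm]
  calc ‖(a : ℂ) * sinh w‖ ^ 2 * m ≤ (a * Real.cosh w.re) ^ 2 * m :=
      mul_le_mul_of_nonneg_right hnum hm.le
    _ ≤ 2 * ‖(a : ℂ) * cosh w - lam‖ ^ 2 := by linarith

lemma Complex.cosh_add_pi_div_four_mul_I (y : ℂ) :
    cosh (y + (π / 4 : ℝ) * I) = (√2 / 2 : ℝ) * (cosh y + I * sinh y) := by
  rw [cosh_add, cosh_mul_I, sinh_mul_I, ← ofReal_cos, ← ofReal_sin, Real.cos_pi_div_four,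
    Real.sin_pi_div_four]
  ring

lemma Complex.sinh_add_pi_div_four_mul_I (y : ℂ) :
    sinh (y + (π / 4 : ℝ) * I) = (√2 / 2 : ℝ) * (sinh y + I * cosh y) := by
  rw [sinh_add, cosh_mul_I, sinh_mul_I, ← ofReal_cos, ← ofReal_sin, Real.cos_pi_div_four,
    Real.sin_pi_div_four]
  ring

lemma zc_eq_cosh (b : ℝ) (y : ℂ) :
    zc b y = (√2 * b : ℝ) * cosh (y + (π / 4 : ℝ) * I) := by
  rw [zc, cosh_add_pi_div_four_mul_I, ← mul_assoc, ← ofReal_mul]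
  congr 2
  linear_combination (-b / 2) * Real.sq_sqrt zero_le_two

lemma zcDeriv_eq_sinh (b : ℝ) (y : ℂ) :
    zcDeriv b y = (√2 * b : ℝ) * sinh (y + (π / 4 : ℝ) * I) := by
  rw [zcDeriv, sinh_add_pi_div_four_mul_I, ← mul_assoc, ← ofReal_mul]
  congr 2
  linear_combination (-b / 2) * Real.sq_sqrt zero_le_two

theorem stmt1_general (d lam1 b : ℝ) (hd : 0 < d) (hd' : d < Real.pi / 4)
    (hb : 0 < b) (hb' : b < lam1 / Real.sqrt 2) :
    ∃ C : ℝ, 0 < C ∧ ∀ lam : ℝ, lam1 ≤ lam → ∀ y : ℂ, |y.im| < d →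
      ‖zcDeriv b y * (zc b y - (lam : ℂ))⁻¹‖ ≤ C := by
  have ha : |√2 * b| < lam1 := by
    rw [abs_of_pos (by positivity)]
    rwa [lt_div_iff₀' (by positivity)] at hb'
  have hσ : 0 < Real.sin (π / 4 - d) :=
    Real.sin_pos_of_pos_of_lt_pi (by linarith) (by linarith [Real.pi_pos])
  obtain ⟨K, hK, hbound⟩ := exists_sq_norm_mul_sinh_le _ _ _ ha hσ
  refine ⟨√K, Real.sqrt_pos.2 hK, fun lam hlam y hy => ?_⟩
  rw [zcDeriv_eq_sinh, zc_eq_cosh]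
  refine norm_mul_inv_le_sqrt (hbound lam hlam _ ?_)
  simpa using Real.sin_pi_div_four_sub_le_sin_add_pi_div_four hy.le (by linarith)

/-- for `0 < d < π/4`, `λ₁ > 0`, `0 < b < λ₁/√2`, there is `C > 0`
(depending only on `λ₁, b, d`) with `|z'(y)·(z(y) - λ)⁻¹| ≤ C` for all `λ ≥ λ₁`
and all `y` in the open strip `|Im y| < d`. -/
theorem stmt1 (d lam1 b : ℝ) (hd : 0 < d) (hd' : d < Real.pi / 4)
    (hlam1 : 0 < lam1) (hb : 0 < b) (hb' : b < lam1 / Real.sqrt 2) :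
    ∃ C : ℝ, 0 < C ∧ ∀ lam : ℝ, lam1 ≤ lam → ∀ y : ℂ, |y.im| < d →
      ‖zcDeriv b y * (zc b y - (lam : ℂ))⁻¹‖ ≤ C :=
  stmt1_general d lam1 b hd hd' hb hb'
end

section
/- Let 0 < d < π/4, b > 0 and β ∈ (0,1). There exists a constant C > 0, depending only on b, d and β, such that for every y ∈ ℂ with |Im y| < d one has Re(z(y)^β) ≥ C · 2^{−β} · e^{β|Re y|}. -/
open Real

lemma norm_zc_le {b : ℝ} (hb : 0 ≤ b) (y : ℂ) : ‖zc b y‖ ≤ √2 * b * cosh y.re := by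
  rw [← sq_le_sq₀ (norm_nonneg _) (by positivity), Complex.sq_norm, Complex.normSq_apply,
    zc_re, zc_im, mul_pow, mul_pow, sq_sqrt zero_le_two]
  have hsinh : sinh y.re ^ 2 ≤ cosh y.re ^ 2 := by nlinarith [cosh_sq y.re]
  have htrig : (cos y.im - sin y.im) ^ 2 + (cos y.im + sin y.im) ^ 2 = 2 := by
    nlinarith [sin_sq_add_cos_sq y.im]
  nlinarith [mul_le_mul_of_nonneg_right hsinh (sq_nonneg (b * (cos y.im + sin y.im)))]

lemma Real.cos_sub_sin_le_of_abs_le {d t : ℝ} (hd : d ≤ π / 2) (ht : |t| ≤ d) :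
    cos d - sin d ≤ cos t - sin t := by
  have hcos : cos d ≤ cos t := by
    rw [← cos_abs t]
    exact cos_le_cos_of_nonneg_of_le_pi (abs_nonneg _) (by linarith [pi_pos]) ht
  have hsin : sin t ≤ sin d :=
    sin_le_sin_of_le_of_le_pi_div_two (by linarith [neg_abs_le t]) hd (le_of_abs_le ht)
  linarith

lemma mul_cosh_le_zc_re {b d : ℝ} (hb : 0 ≤ b) (hd : d ≤ π / 2) {y : ℂ} (hy : |y.im| ≤ d) :
    b * (cos d - sin d) * cosh y.re ≤ (zc b y).re := by
  rw [zc_re, mul_right_comm]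
  exact mul_le_mul_of_nonneg_left (cos_sub_sin_le_of_abs_le hd hy) (by positivity)

lemma Real.exp_abs_le_two_mul_cosh (x : ℝ) : exp |x| ≤ 2 * cosh x := by
  rw [cosh_eq]; linarith [exp_abs_le x]

lemma Complex.mul_norm_rpow_le_re_cpow {w : ℂ} {β κ : ℝ} (hβ₀ : 0 ≤ β) (hβ₁ : β ≤ 1)
    (hw : 0 < w.re) (hκ : κ * ‖w‖ ≤ w.re) : κ * ‖w‖ ^ β ≤ (w ^ (β : ℂ)).re := by
  have hw₀ : w ≠ 0 := fun h => by simp [h] at hw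
  have harg : |w.arg| < π / 2 := Complex.abs_arg_lt_pi_div_two_iff.mpr (Or.inl hw)
  have hκ_le : κ ≤ Real.cos (w.arg * β) := calc
    κ ≤ Real.cos w.arg := by
      rwa [Complex.cos_arg hw₀, le_div_iff₀ (norm_pos_iff.mpr hw₀)]
    _ ≤ Real.cos (w.arg * β) := by
      rw [← Real.cos_abs w.arg, ← Real.cos_abs (w.arg * β), abs_mul, abs_of_nonneg hβ₀]
      exact Real.cos_le_cos_of_nonneg_of_le_pi (by positivity) (by linarith [pi_pos])
        (mul_le_of_le_one_right (abs_nonneg _) hβ₁)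
  rw [Complex.cpow_ofReal_re, mul_comm κ]
  exact mul_le_mul_of_nonneg_left hκ_le (by positivity)

/-- for `0 < d < π/4`, `b > 0`, `β ∈ (0,1)`, there is `C > 0`
(depending only on `b, d, β`) such that `Re(z(y)^β) ≥ C · 2^{-β} · e^{β|Re y|}`
for all `y` in the open strip `|Im y| < d`. -/
theorem stmt2 (d b β : ℝ) (hd : 0 < d) (hd' : d < Real.pi / 4) (hb : 0 < b)
    (hβ : β ∈ Set.Ioo (0 : ℝ) 1) :
    ∃ C : ℝ, 0 < C ∧ ∀ y : ℂ, |y.im| < d →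
      C * (2 : ℝ) ^ (-β) * Real.exp (β * |y.re|) ≤ (zc b y ^ (β : ℂ)).re := by
  set c := cos d - sin d
  have hc : 0 < c := cos_sub_sin_pos hd.le hd'
  refine ⟨c / √2 * (b * c) ^ β, by positivity, fun y hy => ?_⟩
  have hre : b * c * cosh y.re ≤ (zc b y).re :=
    mul_cosh_le_zc_re hb.le (by linarith [pi_pos]) hy.le
  have hnorm : c / √2 * ‖zc b y‖ ≤ (zc b y).re := calc
    c / √2 * ‖zc b y‖ ≤ c / √2 * (√2 * b * cosh y.re) := by gcongr; exact norm_zc_le hb.le y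
    _ = b * c * cosh y.re := by field_simp
    _ ≤ (zc b y).re := hre
  have hlow : b * c * (exp |y.re| / 2) ≤ ‖zc b y‖ := calc
    b * c * (exp |y.re| / 2) ≤ b * c * cosh y.re := by
      gcongr; linarith [exp_abs_le_two_mul_cosh y.re]
    _ ≤ ‖zc b y‖ := hre.trans (Complex.re_le_norm _)
  calc c / √2 * (b * c) ^ β * 2 ^ (-β) * exp (β * |y.re|)
      = c / √2 * (b * c * (exp |y.re| / 2)) ^ β := by
        rw [mul_rpow (mul_pos hb hc).le (div_pos (exp_pos _) two_pos).le,
          div_rpow (exp_pos _).le zero_le_two,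
          rpow_neg zero_le_two, mul_comm β, exp_mul]
        ring
    _ ≤ c / √2 * ‖zc b y‖ ^ β := by gcongr; exact hβ.1.le
    _ ≤ (zc b y ^ (β : ℂ)).re :=
        Complex.mul_norm_rpow_le_re_cpow hβ.1.le hβ.2.le (hre.trans_lt' (by positivity)) hnorm
end

section
/- Let γ, β ∈ (0,1), 0 < d < π/4, λ₁ > 0 and 0 < b < λ₁/√2. Assume there is a constant C₀ > 0 such that |e_{γ,1}(w)| ≤ C₀/(1+|w|) for every w ∈ ℂ with Re w ≤ 0. Then there exists a constant C > 0, depending only on γ, β, d, b, λ₁ and C₀, such that for every k > 0, every positive integer N, every t > 0 and every real λ ≥ λ₁ one has k · ∑_{|j| ≥ N+1} |g_λ(jk, t)| ≤ C · t^{−γ} · e^{−β N k}. -/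
/-- The function `g_λ(y,t) = e_{γ,1}(-t^γ z(y)^β) · z'(y) · (z(y) - λ)⁻¹`. -/
noncomputable def gfun (γ β b t lam : ℝ) (y : ℂ) : ℂ :=
  mlf γ 1 (-(((t ^ γ : ℝ) : ℂ) * zc b y ^ (β : ℂ))) * zcDeriv b y * (zc b y - (lam : ℂ))⁻¹

/-!
On the contour `Re z(y) = b cosh y > 0`, so `Re (t^γ z^β) ≥ 0` and the Mittag-Leffler bound gives
`|e_{γ,1}(-t^γ z^β)| ≤ C₀ t^{-γ} |z|^{-β} ≤ C₀ t^{-γ} (b/2)^{-β} e^{-β|y|}`. Both `|z'(y)|` and,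
because `λ ≥ λ₁ > √2 b`, also `|z(y) - λ|` are comparable to `cosh y`, so
`|g_λ(y,t)| ≤ C₁ t^{-γ} e^{-β|y|}`. The tail `|j| ≥ N + 1` is then dominated by two geometric
series of ratio `r = e^{-βk}`, and the step size is absorbed by `βk r / (1 - r) ≤ 1`.
-/

lemma zc_re_s7 (b y : ℝ) : (zc b y).re = b * Real.cosh y := by
  simp [zc, Complex.cosh_ofReal_re, Complex.sinh_ofReal_im]

lemma zc_im_s7 (b y : ℝ) : (zc b y).im = b * Real.sinh y := by
  simp [zc, Complex.sinh_ofReal_re, Complex.cosh_ofReal_im]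

lemma zcDeriv_re (b y : ℝ) : (zcDeriv b y).re = b * Real.sinh y := by
  simp [zcDeriv, Complex.sinh_ofReal_re, Complex.cosh_ofReal_im]

lemma zcDeriv_im (b y : ℝ) : (zcDeriv b y).im = b * Real.cosh y := by
  simp [zcDeriv, Complex.cosh_ofReal_re, Complex.sinh_ofReal_im]

lemma norm_zcDeriv_sq (b y : ℝ) : ‖zcDeriv b y‖ ^ 2 = 2 * (b * Real.cosh y) ^ 2 - b ^ 2 := by
  rw [Complex.sq_norm, Complex.normSq_apply, zcDeriv_re, zcDeriv_im]
  linear_combination (-b ^ 2) * Real.cosh_sq y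

lemma norm_zc_sub_ofReal_sq (b y lam : ℝ) :
    ‖zc b y - lam‖ ^ 2 = (lam - b * Real.cosh y) ^ 2 + (b * Real.cosh y) ^ 2 - b ^ 2 := by
  rw [Complex.sq_norm, Complex.normSq_apply, Complex.sub_re, Complex.sub_im, zc_re_s7, zc_im_s7,
    Complex.ofReal_re, Complex.ofReal_im]
  linear_combination (-b ^ 2) * Real.cosh_sq y

lemma mul_cosh_le_norm_zc {b : ℝ} (hb : 0 ≤ b) (y : ℝ) : b * Real.cosh y ≤ ‖zc b y‖ := by
  simpa [zc_re_s7, abs_of_nonneg (mul_nonneg hb (Real.cosh_pos y).le)] using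
    Complex.abs_re_le_norm (zc b y)

lemma exp_abs_le_two_mul_cosh (y : ℝ) : Real.exp |y| ≤ 2 * Real.cosh y := by
  rw [← Real.cosh_abs, Real.cosh_eq]
  linarith [Real.exp_pos (-|y|)]

lemma sq_norm_zcDeriv_le {b lam1 lam : ℝ} (h2b : 2 * b ^ 2 < lam1 ^ 2) (hlam1 : 0 < lam1)
    (hlam : lam1 ≤ lam) (y : ℝ) :
    (lam1 ^ 2 - 2 * b ^ 2) * ‖zcDeriv b y‖ ^ 2 ≤ 2 * lam1 ^ 2 * ‖zc b y - lam‖ ^ 2 := by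
  rw [norm_zcDeriv_sq, norm_zc_sub_ofReal_sq]
  set X := b * Real.cosh y
  set A := (lam - X) ^ 2 + X ^ 2
  -- `A ≥ λ²/2 ≥ λ₁²/2`, so `b² ≤ (2b²/λ₁²) A` and `‖z - λ‖² = A - b²` is a fixed fraction of `A`.
  have hA : lam1 ^ 2 ≤ 2 * A := by nlinarith [sq_nonneg (lam - 2 * X)]
  have hXA : X ^ 2 ≤ A := by nlinarith [sq_nonneg (lam - X)]
  nlinarith

lemma norm_zcDeriv_mul_inv_le {b lam1 lam : ℝ} (h2b : 2 * b ^ 2 < lam1 ^ 2) (hlam1 : 0 < lam1)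
    (hlam : lam1 ≤ lam) (y : ℝ) :
    ‖zcDeriv b y‖ * ‖zc b y - lam‖⁻¹ ≤ √(2 * lam1 ^ 2 / (lam1 ^ 2 - 2 * b ^ 2)) := by
  rcases (norm_nonneg (zc b y - lam)).eq_or_lt with h0 | hpos
  · rw [← h0, inv_zero, mul_zero]
    exact Real.sqrt_nonneg _
  rw [← div_eq_mul_inv, Real.le_sqrt (by positivity) (by positivity), div_pow,
    div_le_div_iff₀ (by positivity) (by linarith)]
  linarith [sq_norm_zcDeriv_le h2b hlam1 hlam y]

lemma Complex.re_cpow_ofReal_nonneg {z : ℂ} (hz : 0 ≤ z.re) {β : ℝ} (hβ0 : 0 ≤ β)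
    (hβ1 : β ≤ 1) : 0 ≤ (z ^ (β : ℂ)).re := by
  rw [Complex.cpow_ofReal_re]
  have harg : |z.arg * β| ≤ Real.pi / 2 := by
    rw [abs_mul, abs_of_nonneg hβ0]
    nlinarith [Complex.abs_arg_le_pi_div_two_iff.2 hz, abs_nonneg z.arg]
  exact mul_nonneg (by positivity) (Real.cos_nonneg_of_mem_Icc (abs_le.1 harg))

lemma norm_gfun_le {γ β lam1 b C₀ t lam : ℝ} (hβ0 : 0 ≤ β) (hβ1 : β ≤ 1) (hlam1 : 0 < lam1)
    (hb : 0 < b) (h2b : 2 * b ^ 2 < lam1 ^ 2)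
    (hml : ∀ w : ℂ, w.re ≤ 0 → ‖mlf γ 1 w‖ ≤ C₀ / (1 + ‖w‖))
    (ht : 0 < t) (hlam : lam1 ≤ lam) (y : ℝ) :
    ‖gfun γ β b t lam y‖ ≤ C₀ * √(2 * lam1 ^ 2 / (lam1 ^ 2 - 2 * b ^ 2)) / (b / 2) ^ β
      * t ^ (-γ) * Real.exp (-(β * |y|)) := by
  set z := zc b y
  set w : ℂ := ((t ^ γ : ℝ) : ℂ) * z ^ (β : ℂ)
  have hC₀ : 0 ≤ C₀ := by simpa using (norm_nonneg _).trans (hml 0 le_rfl)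
  have hz : (b / 2) * Real.exp |y| ≤ ‖z‖ := by
    nlinarith [exp_abs_le_two_mul_cosh y, mul_cosh_le_norm_zc hb.le y]
  have hzβ : (b / 2) ^ β * Real.exp (β * |y|) ≤ ‖z‖ ^ β := by
    rw [mul_comm β, Real.exp_mul, ← Real.mul_rpow (by positivity) (by positivity)]
    exact Real.rpow_le_rpow (by positivity) hz hβ0
  have hnorm_w : ‖w‖ = t ^ γ * ‖z‖ ^ β := by
    rw [norm_mul, Complex.norm_of_nonneg (by positivity), Complex.norm_cpow_real]
  have hw_re : 0 ≤ w.re := by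
    rw [Complex.re_ofReal_mul]
    refine mul_nonneg (by positivity) (Complex.re_cpow_ofReal_nonneg ?_ hβ0 hβ1)
    rw [zc_re_s7]
    positivity
  have hmlf : ‖mlf γ 1 (-w)‖ ≤ C₀ / (t ^ γ * ((b / 2) ^ β * Real.exp (β * |y|))) := by
    refine (hml (-w) (by simpa using hw_re)).trans ?_
    rw [norm_neg, hnorm_w]
    gcongr
    nlinarith [Real.rpow_pos_of_pos ht γ]
  calc ‖gfun γ β b t lam y‖ = ‖mlf γ 1 (-w)‖ * (‖zcDeriv b y‖ * ‖z - lam‖⁻¹) := by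
        rw [gfun, norm_mul, norm_mul, norm_inv, mul_assoc]
    _ ≤ C₀ / (t ^ γ * ((b / 2) ^ β * Real.exp (β * |y|)))
          * √(2 * lam1 ^ 2 / (lam1 ^ 2 - 2 * b ^ 2)) := by
        gcongr
        exact norm_zcDeriv_mul_inv_le h2b hlam1 hlam y
    _ = _ := by
        rw [Real.rpow_neg ht.le, Real.exp_neg]
        field_simp

def absTailEquiv (N : ℕ) : ℕ ⊕ ℕ ≃ {j : ℤ // (N : ℤ) + 1 ≤ |j|} where
  toFun := Sum.elim (fun n => ⟨N + 1 + n, by rw [abs_of_nonneg (by positivity)]; omega⟩)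
    (fun n => ⟨-(N + 1 + n), by rw [abs_neg, abs_of_nonneg (by positivity)]; omega⟩)
  invFun j := if 0 ≤ (j : ℤ) then .inl ((j : ℤ).natAbs - (N + 1))
    else .inr ((j : ℤ).natAbs - (N + 1))
  left_inv := by
    rintro (n | n) <;> dsimp only [Sum.elim_inl, Sum.elim_inr] <;> split_ifs <;>
      first | omega | (congr 1; omega)
  right_inv := by
    rintro ⟨j, hj⟩
    rw [Int.abs_eq_natAbs] at hj
    apply Subtype.ext
    dsimp only
    split_ifs <;> dsimp only [Sum.elim_inl, Sum.elim_inr] <;> omega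

lemma natAbs_absTailEquiv (N : ℕ) (x : ℕ ⊕ ℕ) :
    (absTailEquiv N x : ℤ).natAbs = N + 1 + x.elim id id := by
  rcases x with n | n <;>
    dsimp only [absTailEquiv, Equiv.coe_fn_mk, Sum.elim_inl, Sum.elim_inr, id] <;> omega

lemma hasSum_pow_natAbs_absTail {r : ℝ} (hr0 : 0 ≤ r) (hr1 : r < 1) (N : ℕ) :
    HasSum (fun j : {j : ℤ // (N : ℤ) + 1 ≤ |j|} => r ^ (j : ℤ).natAbs)
      (2 * (r ^ (N + 1) / (1 - r))) := by
  have hgeom : HasSum (fun n : ℕ => r ^ (N + 1 + n)) (r ^ (N + 1) / (1 - r)) := by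
    simpa [pow_add, div_eq_mul_inv] using (hasSum_geometric_of_lt_one hr0 hr1).mul_left (r ^ (N + 1))
  rw [← (absTailEquiv N).hasSum_iff, two_mul]
  refine HasSum.sum ?_ ?_ <;> simpa [Function.comp_def, natAbs_absTailEquiv] using hgeom

lemma mul_exp_neg_div_one_sub_exp_neg_le_one {a : ℝ} (ha : 0 < a) :
    a * Real.exp (-a) / (1 - Real.exp (-a)) ≤ 1 := by
  have hexp : Real.exp (-a) < 1 := Real.exp_lt_one_iff.2 (by linarith)
  rw [div_le_one (by linarith)]
  have h := Real.add_one_le_exp a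
  have h1 : Real.exp a * Real.exp (-a) = 1 := by rw [← Real.exp_add]; simp
  nlinarith [Real.exp_pos (-a)]

theorem stmt7_general (γ β lam1 b C₀ : ℝ)
    (hβ : β ∈ Set.Ioo (0 : ℝ) 1)
    (hlam1 : 0 < lam1) (hb : 0 < b) (hb' : b < lam1 / Real.sqrt 2) (hC₀ : 0 < C₀)
    (hml : ∀ w : ℂ, w.re ≤ 0 → ‖mlf γ 1 w‖ ≤ C₀ / (1 + ‖w‖)) :
    ∃ C : ℝ, 0 < C ∧ ∀ k : ℝ, 0 < k → ∀ N : ℕ, 0 < N → ∀ t : ℝ, 0 < t →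
      ∀ lam : ℝ, lam1 ≤ lam →
      Summable (fun j : {j : ℤ // (N : ℤ) + 1 ≤ |j|} =>
        ‖gfun γ β b t lam ((((j : ℤ) : ℝ) * k : ℝ))‖) ∧
      k * (∑' j : {j : ℤ // (N : ℤ) + 1 ≤ |j|},
          ‖gfun γ β b t lam ((((j : ℤ) : ℝ) * k : ℝ))‖)
        ≤ C * t ^ (-γ) * Real.exp (-(β * N * k)) := by
  obtain ⟨hβ0, hβ1⟩ := hβ
  have h2b : 2 * b ^ 2 < lam1 ^ 2 := by
    have h := pow_lt_pow_left₀ ((lt_div_iff₀ (by positivity)).1 hb') (by positivity) two_ne_zero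
    rwa [mul_pow, Real.sq_sqrt zero_le_two, mul_comm] at h
  set C₁ := C₀ * √(2 * lam1 ^ 2 / (lam1 ^ 2 - 2 * b ^ 2)) / (b / 2) ^ β
  have hC₁ : 0 < C₁ := by
    have : 0 < lam1 ^ 2 - 2 * b ^ 2 := by linarith
    positivity
  refine ⟨2 * C₁ / β, by positivity, fun k hk N _ t ht lam hlam => ?_⟩
  set r := Real.exp (-(β * k))
  have hr1 : r < 1 := Real.exp_lt_one_iff.2 (by nlinarith)
  have hbound : ∀ j : {j : ℤ // (N : ℤ) + 1 ≤ |j|},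
      ‖gfun γ β b t lam ((((j : ℤ) : ℝ) * k : ℝ))‖ ≤ C₁ * t ^ (-γ) * r ^ (j : ℤ).natAbs := by
    intro j
    refine (norm_gfun_le hβ0.le hβ1.le hlam1 hb h2b hml ht hlam _).trans_eq (congrArg _ ?_)
    rw [← Real.exp_nat_mul, abs_mul, abs_of_pos hk, Nat.cast_natAbs, Int.cast_abs]
    ring_nf
  have hgeom := (hasSum_pow_natAbs_absTail (Real.exp_pos _).le hr1 N).mul_left (C₁ * t ^ (-γ))
  have hsum := hgeom.summable.of_nonneg_of_le (fun _ => norm_nonneg _) hbound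
  refine ⟨hsum, ?_⟩
  calc k * ∑' j : {j : ℤ // (N : ℤ) + 1 ≤ |j|}, ‖gfun γ β b t lam ((((j : ℤ) : ℝ) * k : ℝ))‖
      ≤ k * (C₁ * t ^ (-γ) * (2 * (r ^ (N + 1) / (1 - r)))) := by
        gcongr
        exact hasSum_le hbound hsum.hasSum hgeom
    _ = 2 * C₁ / β * t ^ (-γ) * r ^ N * (β * k * r / (1 - r)) := by
        field_simp
        ring
    _ ≤ 2 * C₁ / β * t ^ (-γ) * r ^ N * 1 := by
        gcongr
        exact mul_exp_neg_div_one_sub_exp_neg_le_one (by positivity)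
    _ = 2 * C₁ / β * t ^ (-γ) * Real.exp (-(β * N * k)) := by
        rw [mul_one, ← Real.exp_nat_mul]
        ring_nf

/-- the tail of the sinc quadrature sum satisfies
`k ∑_{|j| ≥ N+1} |g_λ(jk,t)| ≤ C t^{-γ} e^{-βNk}` (and the tail is summable). -/
theorem stmt7 (γ β d lam1 b C₀ : ℝ) (hγ : γ ∈ Set.Ioo (0 : ℝ) 1)
    (hβ : β ∈ Set.Ioo (0 : ℝ) 1) (hd : 0 < d) (hd' : d < Real.pi / 4)
    (hlam1 : 0 < lam1) (hb : 0 < b) (hb' : b < lam1 / Real.sqrt 2) (hC₀ : 0 < C₀)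
    (hml : ∀ w : ℂ, w.re ≤ 0 → ‖mlf γ 1 w‖ ≤ C₀ / (1 + ‖w‖)) :
    ∃ C : ℝ, 0 < C ∧ ∀ k : ℝ, 0 < k → ∀ N : ℕ, 0 < N → ∀ t : ℝ, 0 < t →
      ∀ lam : ℝ, lam1 ≤ lam →
      Summable (fun j : {j : ℤ // (N : ℤ) + 1 ≤ |j|} =>
        ‖gfun γ β b t lam ((((j : ℤ) : ℝ) * k : ℝ))‖) ∧
      k * (∑' j : {j : ℤ // (N : ℤ) + 1 ≤ |j|},
          ‖gfun γ β b t lam ((((j : ℤ) : ℝ) * k : ℝ))‖)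
        ≤ C * t ^ (-γ) * Real.exp (-(β * N * k)) :=
  stmt7_general γ β lam1 b C₀ hβ hlam1 hb hb' hC₀ hml
end

section
/- Let γ ∈ (0,1) and w ∈ ℂ. Then for every t > 0 the map t ↦ e_{γ,γ}(−t^γ w) is differentiable and its derivative satisfies d/dt e_{γ,γ}(−t^γ w) = w · t^{γ−1} · ( (γ−1) · e_{γ,2γ}(−t^γ w) − e_{γ,2γ−1}(−t^γ w) ). -/
open Filter Topology

namespace Real

theorem Gamma_add_one_le_rpow_mul_Gamma_add {x a : ℝ} (hx : 0 < x) (ha₀ : 0 < a) (ha₁ : a < 1) :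
    Gamma (x + 1) ≤ (x + a) ^ (1 - a) * Gamma (x + a) := by
  have hxa : 0 < x + a := by linarith
  have hG : 0 < Gamma (x + a) := Gamma_pos_of_pos hxa
  have h := Gamma_mul_add_mul_le_rpow_Gamma_mul_rpow_Gamma hxa (by linarith : 0 < x + a + 1)
    ha₀ (sub_pos.2 ha₁) (add_sub_cancel a 1)
  rwa [show a * (x + a) + (1 - a) * (x + a + 1) = x + 1 by ring, Gamma_add_one hxa.ne',
    mul_rpow hxa.le hG.le, mul_left_comm, ← rpow_add hG, add_sub_cancel, rpow_one] at h

theorem tendsto_Gamma_div_Gamma_add {a : ℝ} (ha : 0 < a) :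
    Tendsto (fun x => Gamma x / Gamma (x + a)) atTop (𝓝 0) := by
  rcases lt_or_ge a 1 with ha₁ | ha₁
  · have hlim : Tendsto (fun x : ℝ => 2 ^ (1 - a) * x ^ (-a)) atTop (𝓝 0) := by
      simpa using (tendsto_rpow_neg_atTop ha).const_mul (2 ^ (1 - a))
    refine squeeze_zero' ?_ ?_ hlim
    · filter_upwards [eventually_gt_atTop 0] with x hx
      exact div_nonneg (Gamma_pos_of_pos hx).le (Gamma_pos_of_pos (by linarith)).le
    filter_upwards [eventually_ge_atTop a] with x hx
    have hx₀ : 0 < x := ha.trans_le hx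
    have hG : 0 < Gamma (x + a) := Gamma_pos_of_pos (by linarith)
    have h := Gamma_add_one_le_rpow_mul_Gamma_add hx₀ ha ha₁
    rw [Gamma_add_one hx₀.ne'] at h
    rw [div_le_iff₀ hG]
    calc Gamma x = x⁻¹ * (x * Gamma x) := by field_simp
      _ ≤ x⁻¹ * ((2 * x) ^ (1 - a) * Gamma (x + a)) := by
        gcongr x⁻¹ * ?_
        refine h.trans ?_
        gcongr
        linarith
      _ = 2 ^ (1 - a) * x ^ (-a) * Gamma (x + a) := by
        rw [mul_rpow zero_le_two hx₀.le, sub_eq_add_neg, rpow_add hx₀, rpow_one]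
        field_simp
  · refine squeeze_zero' ?_ ?_ tendsto_inv_atTop_zero
    · filter_upwards [eventually_gt_atTop 0] with x hx
      exact div_nonneg (Gamma_pos_of_pos hx).le (Gamma_pos_of_pos (by linarith)).le
    filter_upwards [eventually_ge_atTop 1] with x hx
    have hx₀ : 0 < x := by linarith
    have hmono : Gamma (x + 1) ≤ Gamma (x + a) :=
      Gamma_strictMonoOn_Ici.monotoneOn (Set.mem_Ici.2 (by linarith))
        (Set.mem_Ici.2 (by linarith)) (by linarith)
    rw [Gamma_add_one hx₀.ne'] at hmono
    rw [div_le_iff₀ (Gamma_pos_of_pos (by linarith))]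
    calc Gamma x = x⁻¹ * (x * Gamma x) := by field_simp
      _ ≤ x⁻¹ * Gamma (x + a) := by gcongr

end Real

theorem summable_succ_mul_norm_mul_pow_of_tendsto {E : Type*} [NormedAddCommGroup E]
    {c : ℕ → E} (hc : ∀ᶠ n in atTop, c n ≠ 0)
    (hratio : Tendsto (fun n => ‖c (n + 1)‖ / ‖c n‖) atTop (𝓝 0))
    {R : ℝ} (hR : 0 < R) : Summable fun n : ℕ => ((n : ℝ) + 1) * ‖c n‖ * R ^ n := by
  have hsucc : Tendsto (fun n : ℕ => ((n : ℝ) + 1 + 1) / ((n : ℝ) + 1)) atTop (𝓝 1) := by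
    have h := (tendsto_one_div_add_atTop_nhds_zero_nat (𝕜 := ℝ)).const_add 1
    rw [add_zero] at h
    refine h.congr fun n => ?_
    field_simp
  refine summable_of_ratio_test_tendsto_lt_one zero_lt_one ?_ ?_
  · filter_upwards [hc] with n hn
    positivity
  · have hlim := (hsucc.mul_const R).mul hratio
    rw [mul_zero] at hlim
    refine hlim.congr' ?_
    filter_upwards [hc] with n hn
    have hn' : 0 < ‖c n‖ := norm_pos_iff.2 hn
    rw [Real.norm_of_nonneg (by positivity), Real.norm_of_nonneg (by positivity)]
    push_cast
    field_simp
    ring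

section PowerSeries

variable {𝕜 : Type*} [RCLike 𝕜] {c : ℕ → 𝕜}

theorem summable_succ_mul_mul_pow
    (hc : ∀ R : ℝ, 0 < R → Summable fun n : ℕ => ((n : ℝ) + 1) * ‖c n‖ * R ^ n) (z : 𝕜) :
    Summable fun n : ℕ => ((n : 𝕜) + 1) * c n * z ^ n := by
  refine .of_norm_bounded (hc (‖z‖ + 1) (by positivity)) fun n => ?_
  rw [norm_mul, norm_mul, norm_pow]
  gcongr
  · exact (norm_add_le _ _).trans (by simp)
  · linarith

theorem summable_mul_pow
    (hc : ∀ R : ℝ, 0 < R → Summable fun n : ℕ => ((n : ℝ) + 1) * ‖c n‖ * R ^ n) (z : 𝕜) :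
    Summable fun n : ℕ => c n * z ^ n := by
  refine .of_norm_bounded (hc (‖z‖ + 1) (by positivity)) fun n => ?_
  rw [norm_mul, norm_pow]
  calc ‖c n‖ * ‖z‖ ^ n ≤ 1 * ‖c n‖ * (‖z‖ + 1) ^ n := by
        rw [one_mul]; gcongr; linarith
    _ ≤ ((n : ℝ) + 1) * ‖c n‖ * (‖z‖ + 1) ^ n := by gcongr; linarith [n.cast_nonneg (α := ℝ)]

theorem hasDerivAt_tsum_mul_pow
    (hc : ∀ R : ℝ, 0 < R → Summable fun n : ℕ => ((n : ℝ) + 1) * ‖c n‖ * R ^ n) (z : 𝕜) :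
    HasDerivAt (fun y => ∑' n, c n * y ^ n) (∑' n : ℕ, ((n : 𝕜) + 1) * c (n + 1) * z ^ n) z := by
  set R := ‖z‖ + 1
  have hR : 1 ≤ R := by simp [R]
  have hbound : ∀ (n : ℕ) (y : 𝕜), y ∈ Metric.ball 0 R →
      ‖c n * (n * y ^ (n - 1))‖ ≤ ((n : ℝ) + 1) * ‖c n‖ * R ^ n := by
    intro n y hy
    rw [mem_ball_zero_iff] at hy
    rw [norm_mul, norm_mul, norm_pow, RCLike.norm_natCast, mul_assoc ((n : ℝ) + 1), mul_left_comm]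
    gcongr
    · linarith
    · exact (pow_le_pow_left₀ (norm_nonneg y) hy.le _).trans
        (pow_le_pow_right₀ hR (Nat.sub_le n 1))
  have hz : z ∈ Metric.ball (0 : 𝕜) R := by simp [R]
  have h := hasDerivAt_tsum_of_isPreconnected (hc R (by linarith)) Metric.isOpen_ball
    (convex_ball 0 R).isPreconnected (fun n y _ => (hasDerivAt_pow n y).const_mul (c n)) hbound
    hz (summable_mul_pow hc z) hz
  rw [(Summable.of_norm_bounded (hc R (by linarith)) fun n => hbound n z hz).tsum_eq_zero_add,
    Nat.cast_zero, zero_mul, mul_zero, zero_add] at h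
  refine h.congr_deriv (tsum_congr fun n => ?_)
  rw [Nat.add_sub_cancel]
  push_cast
  ring

end PowerSeries

noncomputable def mlfCoeff (γ μ : ℝ) (n : ℕ) : ℂ :=
  (Complex.Gamma (((n : ℝ) * γ + μ : ℝ) : ℂ))⁻¹

theorem mlf_eq_tsum (γ μ : ℝ) (z : ℂ) : mlf γ μ z = ∑' n, mlfCoeff γ μ n * z ^ n := rfl

theorem norm_mlfCoeff (γ μ : ℝ) (n : ℕ) : ‖mlfCoeff γ μ n‖ = |Real.Gamma (n * γ + μ)|⁻¹ := by
  rw [mlfCoeff, Complex.Gamma_ofReal, norm_inv, Complex.norm_real, Real.norm_eq_abs]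

theorem mlfCoeff_succ (γ μ : ℝ) (n : ℕ) : mlfCoeff γ μ (n + 1) = mlfCoeff γ (μ + γ) n := by
  rw [mlfCoeff, mlfCoeff]
  push_cast
  ring_nf

theorem mlfCoeff_eq_mul_mlfCoeff_add_one (γ μ : ℝ) (n : ℕ) :
    mlfCoeff γ μ n = ((n * γ + μ : ℝ) : ℂ) * mlfCoeff γ (μ + 1) n := by
  rw [mlfCoeff, mlfCoeff, Complex.one_div_Gamma_eq_self_mul_one_div_Gamma_add_one]
  push_cast
  ring_nf

theorem summable_succ_mul_norm_mlfCoeff_mul_pow {γ : ℝ} (hγ : 0 < γ) (μ : ℝ) {R : ℝ}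
    (hR : 0 < R) :
    Summable fun n : ℕ => ((n : ℝ) + 1) * ‖mlfCoeff γ μ n‖ * R ^ n := by
  have hx : Tendsto (fun n : ℕ => (n : ℝ) * γ + μ) atTop atTop :=
    tendsto_atTop_add_const_right _ μ (tendsto_natCast_atTop_atTop.atTop_mul_const hγ)
  have hpos := hx.eventually_gt_atTop 0
  refine summable_succ_mul_norm_mul_pow_of_tendsto ?_ ?_ hR
  · filter_upwards [hpos] with n hn
    rw [← norm_pos_iff, norm_mlfCoeff]
    exact inv_pos.2 (abs_pos.2 (Real.Gamma_pos_of_pos hn).ne')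
  · refine ((Real.tendsto_Gamma_div_Gamma_add hγ).comp hx).congr' ?_
    filter_upwards [hpos] with n hn
    have hn' : 0 < ((n + 1 : ℕ) : ℝ) * γ + μ := by push_cast; linarith
    rw [Function.comp_apply, norm_mlfCoeff, norm_mlfCoeff, abs_of_pos (Real.Gamma_pos_of_pos hn),
      abs_of_pos (Real.Gamma_pos_of_pos hn'), inv_div_inv]
    push_cast
    ring_nf

theorem mlf_add_sub_one {γ : ℝ} (hγ : 0 < γ) (μ : ℝ) (z : ℂ) :
    mlf γ (μ + γ - 1) z =
      (μ - 1) * mlf γ (μ + γ) z + γ * ∑' n : ℕ, ((n : ℂ) + 1) * mlfCoeff γ (μ + γ) n * z ^ n := by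
  have hc := fun R => summable_succ_mul_norm_mlfCoeff_mul_pow (R := R) hγ (μ + γ)
  rw [mlf_eq_tsum, mlf_eq_tsum, ← tsum_mul_left, ← tsum_mul_left,
    ← ((summable_mul_pow hc z).mul_left _).tsum_add ((summable_succ_mul_mul_pow hc z).mul_left _)]
  refine tsum_congr fun n => ?_
  rw [mlfCoeff_eq_mul_mlfCoeff_add_one, sub_add_cancel]
  push_cast
  ring

theorem hasDerivAt_mlf {γ : ℝ} (hγ : 0 < γ) (μ : ℝ) (z : ℂ) :
    HasDerivAt (mlf γ μ) ((mlf γ (μ + γ - 1) z - (μ - 1) * mlf γ (μ + γ) z) / γ) z := by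
  have h := hasDerivAt_tsum_mul_pow
    (fun R => summable_succ_mul_norm_mlfCoeff_mul_pow (R := R) hγ μ) z
  simp only [mlfCoeff_succ] at h
  rwa [mlf_add_sub_one hγ, add_sub_cancel_left,
    mul_div_cancel_left₀ _ (Complex.ofReal_ne_zero.2 hγ.ne')]

/-- `d/dt e_{γ,γ}(-t^γ w)
  = w t^{γ-1} ((γ-1) e_{γ,2γ}(-t^γ w) - e_{γ,2γ-1}(-t^γ w))` for `t > 0`. -/
theorem stmt13 (γ : ℝ) (hγ : γ ∈ Set.Ioo (0 : ℝ) 1) (w : ℂ) :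
    ∀ t : ℝ, 0 < t →
      HasDerivAt (fun s : ℝ => mlf γ γ (-((s ^ γ : ℝ) : ℂ) * w))
        (w * ((t ^ (γ - 1) : ℝ) : ℂ) *
          (((γ : ℂ) - 1) * mlf γ (2 * γ) (-((t ^ γ : ℝ) : ℂ) * w)
            - mlf γ (2 * γ - 1) (-((t ^ γ : ℝ) : ℂ) * w))) t := by
  intro t ht
  have hinner : HasDerivAt (fun s : ℝ => -((s ^ γ : ℝ) : ℂ) * w)
      (-((γ * t ^ (γ - 1) : ℝ) : ℂ) * w) t :=
    ((Real.hasDerivAt_rpow_const (Or.inl ht.ne')).ofReal_comp.neg).mul_const w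
  have houter := hasDerivAt_mlf hγ.1 γ (-((t ^ γ : ℝ) : ℂ) * w)
  rw [← two_mul] at houter
  refine (houter.comp t hinner).congr_deriv ?_
  have hγ₀ : (γ : ℂ) ≠ 0 := Complex.ofReal_ne_zero.2 hγ.1.ne'
  rw [Complex.ofReal_mul]
  field_simp
  ring
end

section
/- Let H be a complex Hilbert space with a (finite or countable) Hilbert basis (ψ_j)_{j∈J}, and let (λ_j)_{j∈J} be real numbers with λ_j ≥ λ₁ > 0 for all j. Let γ ∈ (0,1), β ∈ (0,1), μ ∈ ℝ, and let δ ≥ 0 and ρ be real numbers with 0 < ρ − δ < β. Assume there is a constant C₀ > 0 such that |e_{γ,μ}(w)| ≤ C₀/(1+|w|) for every w ∈ ℂ with Re w ≤ 0. Then there is a constant C > 0, depending only on C₀, such that for every t > 0 and every v ∈ H with ∑_j λ_j^{2δ} |⟨v,ψ_j⟩|² < ∞, ( ∑_j λ_j^{2ρ} |e_{γ,μ}(−t^γ λ_j^β)|² |⟨v,ψ_j⟩|² )^{1/2} ≤ C · t^{−γ(ρ−δ)/β} · ( ∑_j λ_j^{2δ} |⟨v,ψ_j⟩|² )^{1/2}.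 -/
open scoped ComplexInnerProductSpace

/-!
Inserting `x ^ θ ≤ 1 + x` for `θ = (ρ - δ) / β ∈ [0, 1]` into the decay bound gives
`|e_{γ,μ}(-x)| ≤ C₀ x ^ (-θ)`. At `x = t ^ γ λ ^ β` the factor `x ^ (-θ)` is
`t ^ (-γ θ) λ ^ (δ - ρ)`, so `λ ^ ρ |e_{γ,μ}(-t ^ γ λ ^ β)| ≤ C₀ t ^ (-γ θ) λ ^ δ` for every
eigenvalue, and squaring and summing gives the estimate with `C = C₀`.
-/

lemma Real.rpow_le_one_add_self {x θ : ℝ} (hx : 0 ≤ x) (hθ₀ : 0 ≤ θ) (hθ₁ : θ ≤ 1) :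
    x ^ θ ≤ 1 + x := by
  rcases le_total x 1 with hx1 | hx1
  · linarith [Real.rpow_le_one hx hx1 hθ₀]
  · linarith [Real.rpow_le_self_of_one_le hx1 hθ₁]

lemma norm_apply_neg_le_mul_rpow_neg {f : ℂ → ℂ} {C₀ : ℝ}
    (hf : ∀ w : ℂ, w.re ≤ 0 → ‖f w‖ ≤ C₀ / (1 + ‖w‖)) {x θ : ℝ} (hx : 0 < x)
    (hθ₀ : 0 ≤ θ) (hθ₁ : θ ≤ 1) :
    ‖f (-(x : ℂ))‖ ≤ C₀ * x ^ (-θ) := by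
  have hdecay : ‖f (-(x : ℂ))‖ ≤ C₀ / (1 + x) := by
    simpa [abs_of_pos hx] using hf (-(x : ℂ)) (by simp [hx.le])
  have hC₀ : 0 ≤ C₀ := by
    simpa using (norm_nonneg _).trans (hf 0 le_rfl)
  calc ‖f (-(x : ℂ))‖ ≤ C₀ / (1 + x) := hdecay
    _ ≤ C₀ / x ^ θ := by
      gcongr
      exact Real.rpow_le_one_add_self hx.le hθ₀ hθ₁
    _ = C₀ * x ^ (-θ) := by rw [Real.rpow_neg hx.le, div_eq_mul_inv]

lemma rpow_mul_norm_apply_neg_le {f : ℂ → ℂ} {C₀ : ℝ}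
    (hf : ∀ w : ℂ, w.re ≤ 0 → ‖f w‖ ≤ C₀ / (1 + ‖w‖)) {s a β δ ρ : ℝ} (hs : 0 < s) (ha : 0 < a)
    (hβ : 0 < β) (hρδ : 0 ≤ ρ - δ) (hρβ : ρ - δ ≤ β) :
    a ^ ρ * ‖f (-((s * a ^ β : ℝ) : ℂ))‖ ≤ C₀ * s ^ (-((ρ - δ) / β)) * a ^ δ := by
  set θ := (ρ - δ) / β
  have hθ₀ : 0 ≤ θ := div_nonneg hρδ hβ.le
  have hθ₁ : θ ≤ 1 := (div_le_one hβ).2 hρβ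
  have hx : 0 < s * a ^ β := mul_pos hs (Real.rpow_pos_of_pos ha β)
  have hpow : (s * a ^ β) ^ (-θ) = s ^ (-θ) * a ^ (δ - ρ) := by
    rw [Real.mul_rpow hs.le (Real.rpow_nonneg ha.le β), ← Real.rpow_mul ha.le]
    congr 2
    rw [mul_neg, mul_div_cancel₀ _ hβ.ne', neg_sub]
  calc a ^ ρ * ‖f (-((s * a ^ β : ℝ) : ℂ))‖
      ≤ a ^ ρ * (C₀ * (s ^ (-θ) * a ^ (δ - ρ))) := by
        rw [← hpow]
        gcongr
        exact norm_apply_neg_le_mul_rpow_neg hf hx hθ₀ hθ₁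
    _ = C₀ * s ^ (-θ) * (a ^ ρ * a ^ (δ - ρ)) := by ring
    _ = C₀ * s ^ (-θ) * a ^ δ := by rw [← Real.rpow_add ha, add_sub_cancel]

lemma Real.sqrt_tsum_le_mul_sqrt_tsum {ι : Type*} {f g : ι → ℝ} {K : ℝ} (hK : 0 ≤ K)
    (hf : ∀ i, 0 ≤ f i) (hfg : ∀ i, f i ≤ K ^ 2 * g i) (hg : Summable g) :
    √(∑' i, f i) ≤ K * √(∑' i, g i) := by
  have hKg : Summable fun i ↦ K ^ 2 * g i := hg.mul_left _
  calc √(∑' i, f i) ≤ √(∑' i, K ^ 2 * g i) :=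
        Real.sqrt_le_sqrt ((hKg.of_nonneg_of_le hf hfg).tsum_le_tsum hfg hKg)
    _ = K * √(∑' i, g i) := by rw [tsum_mul_left, Real.sqrt_mul (sq_nonneg K), Real.sqrt_sq hK]

theorem stmt15_general {H : Type*} [NormedAddCommGroup H] [InnerProductSpace ℂ H]
    {J : Type*} (ψ : HilbertBasis J ℂ H)
    (lam : J → ℝ) (lam1 : ℝ) (hlam1 : 0 < lam1) (hlam : ∀ j, lam1 ≤ lam j)
    (γ β μ δ ρ C₀ : ℝ) (hβ : β ∈ Set.Ioo (0 : ℝ) 1)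
    (hρδ : 0 < ρ - δ) (hρβ : ρ - δ < β) (hC₀ : 0 < C₀)
    (hml : ∀ w : ℂ, w.re ≤ 0 → ‖mlf γ μ w‖ ≤ C₀ / (1 + ‖w‖)) :
    ∃ C : ℝ, 0 < C ∧ ∀ t : ℝ, 0 < t → ∀ v : H,
      Summable (fun j : J => lam j ^ (2 * δ) * ‖⟪ψ j, v⟫‖ ^ 2) →
      Real.sqrt (∑' j : J, lam j ^ (2 * ρ) *
          ‖mlf γ μ (-((t ^ γ * lam j ^ β : ℝ) : ℂ))‖ ^ 2 * ‖⟪ψ j, v⟫‖ ^ 2)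
        ≤ C * t ^ (-(γ * (ρ - δ) / β)) *
            Real.sqrt (∑' j : J, lam j ^ (2 * δ) * ‖⟪ψ j, v⟫‖ ^ 2) := by
  refine ⟨C₀, hC₀, fun t ht v hsum => ?_⟩
  have hK : 0 ≤ C₀ * t ^ (-(γ * (ρ - δ) / β)) := by positivity
  have hlam_pos (j : J) : 0 < lam j := hlam1.trans_le (hlam j)
  refine Real.sqrt_tsum_le_mul_sqrt_tsum hK (fun j ↦ by have := hlam_pos j; positivity)
    (fun j ↦ ?_) hsum
  have hlamj := hlam_pos j
  have hpoint := rpow_mul_norm_apply_neg_le hml (Real.rpow_pos_of_pos ht γ) hlamj hβ.1 hρδ.le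
    hρβ.le
  rw [← Real.rpow_mul ht.le, mul_neg, ← mul_div_assoc] at hpoint
  rw [mul_comm 2 ρ, mul_comm 2 δ, Real.rpow_mul hlamj.le, Real.rpow_mul hlamj.le]
  simp only [Real.rpow_two]
  calc _ = (lam j ^ ρ * ‖mlf γ μ (-((t ^ γ * lam j ^ β : ℝ) : ℂ))‖) ^ 2 * ‖⟪ψ j, v⟫‖ ^ 2 := by
        ring
    _ ≤ (C₀ * t ^ (-(γ * (ρ - δ) / β)) * lam j ^ δ) ^ 2 * ‖⟪ψ j, v⟫‖ ^ 2 := by gcongr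
    _ = _ := by ring

/-- smoothing estimate
`‖e_{γ,μ}(-t^γ L^β) v‖_{Ḣ^{2ρ}} ≤ C t^{-γ(ρ-δ)/β} ‖v‖_{Ḣ^{2δ}}` in spectral form. -/
theorem stmt15 {H : Type*} [NormedAddCommGroup H] [InnerProductSpace ℂ H]
    [CompleteSpace H] {J : Type*} [Countable J] (ψ : HilbertBasis J ℂ H)
    (lam : J → ℝ) (lam1 : ℝ) (hlam1 : 0 < lam1) (hlam : ∀ j, lam1 ≤ lam j)
    (γ β μ δ ρ C₀ : ℝ) (hγ : γ ∈ Set.Ioo (0 : ℝ) 1) (hβ : β ∈ Set.Ioo (0 : ℝ) 1)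
    (hδ : 0 ≤ δ) (hρδ : 0 < ρ - δ) (hρβ : ρ - δ < β) (hC₀ : 0 < C₀)
    (hml : ∀ w : ℂ, w.re ≤ 0 → ‖mlf γ μ w‖ ≤ C₀ / (1 + ‖w‖)) :
    ∃ C : ℝ, 0 < C ∧ ∀ t : ℝ, 0 < t → ∀ v : H,
      Summable (fun j : J => lam j ^ (2 * δ) * ‖⟪ψ j, v⟫‖ ^ 2) →
      Real.sqrt (∑' j : J, lam j ^ (2 * ρ) *
          ‖mlf γ μ (-((t ^ γ * lam j ^ β : ℝ) : ℂ))‖ ^ 2 * ‖⟪ψ j, v⟫‖ ^ 2)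
        ≤ C * t ^ (-(γ * (ρ - δ) / β)) *
            Real.sqrt (∑' j : J, lam j ^ (2 * δ) * ‖⟪ψ j, v⟫‖ ^ 2) :=
  stmt15_general ψ lam lam1 hlam1 hlam γ β μ δ ρ C₀ hβ hρδ hρβ hC₀ hml
end

section
/- Let X be a real or complex Banach space, let a < b be real numbers, set τ := b − a and m := (a+b)/2, and let g : ℝ → X be twice continuously differentiable on [a,b]. Then ‖ (1/τ) ∫_a^b g(η) dη − g(m) ‖ ≤ τ^{3/2} · ( ∫_a^b ‖g''(r)‖² dr )^{1/2}. -/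
/-!
Taylor's formula with integral remainder at the midpoint `m` gives
`g η = g m + (η - m) • g' m + ∫_m^η (η - s) • g'' s ds`. Averaging over `[a, b]` kills the linear
term because `m` is the midpoint, and each remainder is at most `τ ∫_a^b ‖g''‖`, which
Cauchy–Schwarz bounds by `τ^{3/2} (∫_a^b ‖g''‖²)^{1/2}`.
-/

open MeasureTheory Set
open scoped Interval Nat

section

variable {E : Type*} [NormedAddCommGroup E] [NormedSpace ℝ E]

theorem iteratedDerivWithin_subset {𝕜 F : Type*} [NontriviallyNormedField 𝕜]
    [NormedAddCommGroup F] [NormedSpace 𝕜 F] {n : ℕ} {f : 𝕜 → F} {s t : Set 𝕜} {x : 𝕜}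
    (st : s ⊆ t) (hs : UniqueDiffOn 𝕜 s) (ht : UniqueDiffOn 𝕜 t) (hf : ContDiffOn 𝕜 n f t)
    (hx : x ∈ s) : iteratedDerivWithin n f s x = iteratedDerivWithin n f t x := by
  simp only [iteratedDerivWithin, iteratedFDerivWithin_subset st hs ht hf hx]

theorem taylorWithinEval_one (f : ℝ → E) (s : Set ℝ) (x₀ x : ℝ) :
    taylorWithinEval f 1 s x₀ x = f x₀ + (x - x₀) • derivWithin f s x₀ := by
  simp [taylorWithinEval_succ]

theorem taylor_integral_remainder_of_ordConnected [CompleteSpace E] {f : ℝ → E} {s : Set ℝ}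
    [s.OrdConnected] (hs : UniqueDiffOn ℝ s) {n : ℕ} (hf : ContDiffOn ℝ (n + 1 : ℕ) f s)
    {x₀ x : ℝ} (hx₀ : x₀ ∈ s) (hx : x ∈ s) :
    f x - taylorWithinEval f n s x₀ x =
      ∫ t in x₀..x, ((x - t) ^ n / n !) • iteratedDerivWithin (n + 1) f s t := by
  rcases eq_or_ne x₀ x with rfl | hne
  · simp
  have hsub : [[x₀, x]] ⊆ s := OrdConnected.uIcc_subset ‹_› hx₀ hx
  have hderiv : ∀ k ≤ n + 1, ∀ t ∈ [[x₀, x]],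
      iteratedDerivWithin k f [[x₀, x]] t = iteratedDerivWithin k f s t := fun k hk t ht ↦
    iteratedDerivWithin_subset hsub (uniqueDiffOn_uIcc hne) hs (hf.of_le (by exact_mod_cast hk)) ht
  have htaylor : taylorWithinEval f n s x₀ x = taylorWithinEval f n [[x₀, x]] x₀ x := by
    simp only [taylor_within_apply]
    refine Finset.sum_congr rfl fun k hk ↦ ?_
    rw [hderiv k (by simp at hk; omega) x₀ left_mem_uIcc]
  rw [htaylor, taylor_integral_remainder (hf.mono hsub)]
  exact intervalIntegral.integral_congr fun t ht ↦ by simp only [hderiv (n + 1) le_rfl t ht]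

theorem intervalIntegral.integral_le_sqrt_mul_sqrt_integral_sq {f : ℝ → ℝ} {a b : ℝ}
    (hab : a ≤ b) (hf : IntervalIntegrable f volume a b)
    (hf2 : IntervalIntegrable (fun x ↦ f x ^ 2) volume a b) :
    ∫ x in a..b, f x ≤ √(b - a) * √(∫ x in a..b, f x ^ 2) := by
  -- `c ↦ ∫ (f - c)²` is a nonnegative quadratic, so its discriminant is nonpositive.
  have hquad : ∀ c : ℝ,
      0 ≤ (b - a) * (c * c) + (-2 * ∫ x in a..b, f x) * c + ∫ x in a..b, f x ^ 2 := by
    intro c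
    have hexpand : ∫ x in a..b, (f x - c) ^ 2
        = (∫ x in a..b, f x ^ 2) - 2 * c * (∫ x in a..b, f x) + (b - a) * c ^ 2 := by
      have : (fun x ↦ (f x - c) ^ 2) = fun x ↦ f x ^ 2 - (2 * c) * f x + c ^ 2 := by
        ext x; ring
      rw [this, integral_add (hf2.sub (hf.const_mul _)) intervalIntegrable_const,
        integral_sub hf2 (hf.const_mul _), integral_const_mul, integral_const, smul_eq_mul]
    have : 0 ≤ ∫ x in a..b, (f x - c) ^ 2 := integral_nonneg hab fun x _ ↦ sq_nonneg (f x - c)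
    nlinarith
  have hdisc := discrim_le_zero hquad
  rw [discrim] at hdisc
  calc ∫ x in a..b, f x ≤ |∫ x in a..b, f x| := le_abs_self _
    _ ≤ √((b - a) * ∫ x in a..b, f x ^ 2) := Real.abs_le_sqrt (by nlinarith)
    _ = √(b - a) * √(∫ x in a..b, f x ^ 2) := Real.sqrt_mul (sub_nonneg.2 hab) _

theorem norm_sub_taylorWithinEval_one_le [CompleteSpace E] {g : ℝ → E} {a b x y : ℝ}
    (hab : a < b) (hg : ContDiffOn ℝ 2 g (Icc a b)) (hx : x ∈ Icc a b) (hy : y ∈ Icc a b) :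
    ‖g y - taylorWithinEval g 1 (Icc a b) x y‖
      ≤ (b - a) * ∫ t in a..b, ‖iteratedDerivWithin 2 g (Icc a b) t‖ := by
  set g₂ := iteratedDerivWithin 2 g (Icc a b)
  have hg₂ : ContinuousOn g₂ (Icc a b) :=
    hg.continuousOn_iteratedDerivWithin le_rfl (uniqueDiffOn_Icc hab)
  have hsub : Ι x y ⊆ Icc a b := ordConnected_Icc.uIoc_subset hx hy
  have hint : IntegrableOn (fun t ↦ (b - a) * ‖g₂ t‖) (Icc a b) :=
    (continuousOn_const.mul hg₂.norm).integrableOn_Icc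
  have hint' : IntegrableOn (fun t ↦ ‖(y - t) • g₂ t‖) (Ι x y) :=
    (((continuousOn_const.sub continuousOn_id).smul hg₂).norm.integrableOn_Icc).mono_set hsub
  rw [taylor_integral_remainder_of_ordConnected (uniqueDiffOn_Icc hab) hg hx hy]
  simp only [pow_one, Nat.factorial_one, Nat.cast_one, div_one]
  calc ‖∫ t in x..y, (y - t) • g₂ t‖
      ≤ ∫ t in Ι x y, ‖(y - t) • g₂ t‖ := intervalIntegral.norm_integral_le_integral_norm_uIoc
    _ ≤ ∫ t in Ι x y, (b - a) * ‖g₂ t‖ := by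
        refine setIntegral_mono_on hint' (hint.mono_set hsub) measurableSet_uIoc fun t ht ↦ ?_
        obtain ⟨hat, htb⟩ := hsub ht
        rw [norm_smul, Real.norm_eq_abs]
        gcongr
        exact abs_le.2 ⟨by linarith [hy.1], by linarith [hy.2]⟩
    _ ≤ ∫ t in Icc a b, (b - a) * ‖g₂ t‖ :=
        setIntegral_mono_set hint (ae_of_all _ fun t ↦ by positivity) hsub.eventuallyLE
    _ = (b - a) * ∫ t in a..b, ‖g₂ t‖ := by
        rw [intervalIntegral.integral_of_le hab.le, integral_Icc_eq_integral_Ioc,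
          integral_const_mul]

theorem integral_sub_midpoint_eq_zero (a b : ℝ) : ∫ η in a..b, (η - (a + b) / 2) = 0 := by
  rw [intervalIntegral.integral_comp_sub_right (fun η ↦ η), integral_id]
  ring

theorem inv_smul_integral_sub_apply_midpoint [CompleteSpace E] {g : ℝ → E} {a b : ℝ}
    (hab : a ≠ b) (hg : IntervalIntegrable g volume a b) (v : E) :
    (b - a)⁻¹ • (∫ η in a..b, g η) - g ((a + b) / 2)
      = (b - a)⁻¹ • ∫ η in a..b, (g η - (g ((a + b) / 2) + (η - (a + b) / 2) • v)) := by
  have hlin : IntervalIntegrable (fun η ↦ (η - (a + b) / 2) • v) volume a b :=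
    (by fun_prop : Continuous fun η : ℝ ↦ (η - (a + b) / 2) • v).intervalIntegrable a b
  rw [intervalIntegral.integral_sub hg (intervalIntegrable_const.add hlin),
    intervalIntegral.integral_add intervalIntegrable_const hlin,
    intervalIntegral.integral_smul_const, integral_sub_midpoint_eq_zero, zero_smul, add_zero,
    intervalIntegral.integral_const, smul_sub, smul_smul, inv_mul_cancel₀ (sub_ne_zero.2 hab.symm),
    one_smul]

end

/-- pseudo-midpoint quadrature estimate: for `g : ℝ → X` twice
continuously differentiable on `[a,b]`, with `τ = b - a` and `m = (a+b)/2`,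
`‖(1/τ) ∫_a^b g(η) dη − g(m)‖ ≤ τ^{3/2} (∫_a^b ‖g''(r)‖² dr)^{1/2}`. -/
theorem stmt17 {X : Type*} [NormedAddCommGroup X] [NormedSpace ℝ X] [CompleteSpace X]
    (a b : ℝ) (hab : a < b) (g : ℝ → X) (hg : ContDiffOn ℝ 2 g (Set.Icc a b)) :
    ‖(b - a)⁻¹ • (∫ η in a..b, g η) - g ((a + b) / 2)‖
      ≤ (b - a) ^ ((3 : ℝ) / 2) *
          Real.sqrt (∫ r in a..b, ‖iteratedDerivWithin 2 g (Set.Icc a b) r‖ ^ 2) := by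
  set g₂ := iteratedDerivWithin 2 g (Icc a b)
  have hτ : 0 < b - a := sub_pos.2 hab
  have hm : (a + b) / 2 ∈ Icc a b := ⟨by linarith, by linarith⟩
  have hg₂ : ContinuousOn (fun r ↦ ‖g₂ r‖) (Icc a b) :=
    (hg.continuousOn_iteratedDerivWithin le_rfl (uniqueDiffOn_Icc hab)).norm
  have hremainder : ∀ η ∈ Ι a b, ‖g η - taylorWithinEval g 1 (Icc a b) ((a + b) / 2) η‖
      ≤ (b - a) * ∫ r in a..b, ‖g₂ r‖ := fun η hη ↦
    norm_sub_taylorWithinEval_one_le hab hg hm (uIcc_of_le hab.le ▸ uIoc_subset_uIcc hη)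
  calc ‖(b - a)⁻¹ • (∫ η in a..b, g η) - g ((a + b) / 2)‖
      = (b - a)⁻¹ * ‖∫ η in a..b, (g η - taylorWithinEval g 1 (Icc a b) ((a + b) / 2) η)‖ := by
        simp_rw [taylorWithinEval_one]
        rw [inv_smul_integral_sub_apply_midpoint hab.ne
          (hg.continuousOn.intervalIntegrable_of_Icc hab.le), norm_smul, norm_inv,
          Real.norm_of_nonneg hτ.le]
    _ ≤ (b - a)⁻¹ * ((b - a) * (∫ r in a..b, ‖g₂ r‖) * |b - a|) := by
        gcongr
        exact intervalIntegral.norm_integral_le_of_norm_le_const hremainder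
    _ = (b - a) * ∫ r in a..b, ‖g₂ r‖ := by
        rw [abs_of_pos hτ]
        field_simp
    _ ≤ (b - a) * (√(b - a) * √(∫ r in a..b, ‖g₂ r‖ ^ 2)) := by
        gcongr
        exact intervalIntegral.integral_le_sqrt_mul_sqrt_integral_sq hab.le
          (hg₂.intervalIntegrable_of_Icc hab.le) ((hg₂.pow 2).intervalIntegrable_of_Icc hab.le)
    _ = (b - a) ^ ((3 : ℝ) / 2) * √(∫ r in a..b, ‖g₂ r‖ ^ 2) := by
        rw [show (3 : ℝ) / 2 = 1 + 1 / 2 by norm_num, Real.rpow_add hτ, Real.rpow_one,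
          Real.sqrt_eq_rpow, mul_assoc]
end
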